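/- arXiv:2203.11811 — 3 statements merged into one kernel-verified Lean document; each statement's English description precedes it below -/
import Mathlib

section
/- In a coordinate chart of a Riemannian manifold (M,g) with Christoffel symbols Γ, on TM ⊕ TM with coordinates (x, V, R), define f₁ = V∂_x − (V + Γ(V,R))∂_R + (R − Γ(V,V))∂_V and f₂ = R∂_R + V∂_V. Then [f₂, f₁] = V∂_x − Γ(V,R)∂_R − Γ(V,V)∂_V. In particular the integral curves of [f₂,f₁] satisfy ẋ = V, D_tR = 0, D_tV = 0, so their x-projection is the geodesic t ↦ exp_x(tV). -/
/-- Lie bracket of vector fields on a normed space (coordinate formula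
`[X,Y] = DY·X − DX·Y`). -/
noncomputable def lieBkt {F : Type*} [NormedAddCommGroup F] [NormedSpace ℝ F]
    (X Y : F → F) : F → F := fun p => fderiv ℝ Y p (X p) - fderiv ℝ X p (Y p)

/-- in a coordinate chart `E` of `(M,g)` with Christoffel symbols
`Γ` (symmetric, smooth), on `TM ⊕ TM` with coordinates `p = (x, R, V)`, for
`f₁ = V∂_x − (V + Γ(V,R))∂_R + (R − Γ(V,V))∂_V` and `f₂ = R∂_R + V∂_V` one has
`[f₂,f₁] = V∂_x − Γ(V,R)∂_R − Γ(V,V)∂_V`; integral curves of `[f₂,f₁]` satisfy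
`ẋ = V`, `D_tR = 0`, `D_tV = 0` (where `D_tW = Ẇ + Γ(ẋ,W)`), and their
`x`-projection solves the geodesic equation `ẍ + Γ(ẋ,ẋ) = 0`, i.e. is the
geodesic `t ↦ exp_x(tV)`. -/
theorem stmt10 {E : Type*} [NormedAddCommGroup E] [NormedSpace ℝ E]
    (Γ : E → E →L[ℝ] E →L[ℝ] E) (hΓ : ContDiff ℝ (⊤ : ℕ∞) Γ)
    (hsym : ∀ x u v, Γ x u v = Γ x v u)
    (f₁ f₂ : E × E × E → E × E × E)
    (hf₁ : f₁ = fun p => (p.2.2, -(p.2.2 + Γ p.1 p.2.2 p.2.1), p.2.1 - Γ p.1 p.2.2 p.2.2))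
    (hf₂ : f₂ = fun p => (0, p.2.1, p.2.2)) :
    (∀ p, lieBkt f₂ f₁ p = (p.2.2, -(Γ p.1 p.2.2 p.2.1), -(Γ p.1 p.2.2 p.2.2))) ∧
    (∀ c : ℝ → E × E × E, (∀ t, HasDerivAt c (lieBkt f₂ f₁ (c t)) t) →
      ∀ t, deriv (fun s => (c s).1) t = (c t).2.2 ∧
        deriv (fun s => (c s).2.1) t
          + Γ ((c t).1) (deriv (fun s => (c s).1) t) ((c t).2.1) = 0 ∧
        deriv (fun s => (c s).2.2) t
          + Γ ((c t).1) (deriv (fun s => (c s).1) t) ((c t).2.2) = 0 ∧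
        deriv (deriv (fun s => (c s).1)) t
          + Γ ((c t).1) (deriv (fun s => (c s).1) t) (deriv (fun s => (c s).1) t) = 0) := by

  have key : ∀ p : E × E × E, lieBkt f₂ f₁ p
      = (p.2.2, -(Γ p.1 p.2.2 p.2.1), -(Γ p.1 p.2.2 p.2.2)) := by
    subst hf₁ hf₂
    intro p
    have hΓd : HasFDerivAt (fun q : E × E × E => Γ q.1)
        ((fderiv ℝ Γ p.1).comp (ContinuousLinearMap.fst ℝ E (E × E))) p :=
      ((hΓ.differentiable (by simp) p.1).hasFDerivAt).comp p (hasFDerivAt_fst)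
    have hV : HasFDerivAt (fun q : E × E × E => q.2.2)
        ((ContinuousLinearMap.snd ℝ E E).comp (ContinuousLinearMap.snd ℝ E (E × E))) p :=
      (hasFDerivAt_snd).snd
    have hR : HasFDerivAt (fun q : E × E × E => q.2.1)
        ((ContinuousLinearMap.fst ℝ E E).comp (ContinuousLinearMap.snd ℝ E (E × E))) p :=
      (hasFDerivAt_snd).fst
    have h2 := (hΓd.clm_apply hV).clm_apply hR
    have h3 := (hΓd.clm_apply hV).clm_apply hV
    have hfd1 := hV.prodMk (((hV.add h2).neg).prodMk (hR.sub h3))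
    have hfd2 : HasFDerivAt (fun q : E × E × E => ((0:E), q.2.1, q.2.2))
        ((0 : (E × E × E) →L[ℝ] E).prod
        (((ContinuousLinearMap.fst ℝ E E).comp (ContinuousLinearMap.snd ℝ E (E × E))).prod
         ((ContinuousLinearMap.snd ℝ E E).comp (ContinuousLinearMap.snd ℝ E (E × E))))) p :=
      (hasFDerivAt_const (0:E) p).prodMk (hR.prodMk hV)
    unfold lieBkt
    rw [(show HasFDerivAt (fun q : E × E × E => (q.2.2, -(q.2.2 + Γ q.1 q.2.2 q.2.1), q.2.1 - Γ q.1 q.2.2 q.2.2)) _ p from hfd1).fderiv, hfd2.fderiv]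
    ext <;> simp <;> abel
  refine ⟨key, ?_⟩
  intro c hc t
  have hc' : ∀ s, HasDerivAt c
      ((c s).2.2, -(Γ (c s).1 (c s).2.2 (c s).2.1), -(Γ (c s).1 (c s).2.2 (c s).2.2)) s := by
    intro s; have := hc s; rwa [key] at this
  have hx : ∀ s, HasDerivAt (fun u => (c u).1) (c s).2.2 s := by
    intro s
    exact ((ContinuousLinearMap.fst ℝ E (E × E)).hasFDerivAt.comp_hasDerivAt s (hc' s))
  have hR : HasDerivAt (fun u => (c u).2.1) (-(Γ (c t).1 (c t).2.2 (c t).2.1)) t :=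
    ((ContinuousLinearMap.fst ℝ E E).comp
      (ContinuousLinearMap.snd ℝ E (E × E))).hasFDerivAt.comp_hasDerivAt t (hc' t)
  have hVd : ∀ s, HasDerivAt (fun u => (c u).2.2) (-(Γ (c s).1 (c s).2.2 (c s).2.2)) s := by
    intro s
    exact ((ContinuousLinearMap.snd ℝ E E).comp
      (ContinuousLinearMap.snd ℝ E (E × E))).hasFDerivAt.comp_hasDerivAt s (hc' s)
  have hxderiv : deriv (fun s => (c s).1) = fun s => (c s).2.2 :=
    funext fun s => (hx s).deriv
  refine ⟨(hx t).deriv, ?_, ?_, ?_⟩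
  · rw [(hx t).deriv, hR.deriv]; simp
  · rw [(hx t).deriv, (hVd t).deriv]; simp
  · rw [hxderiv, (hVd t).deriv]; simp
end

section
/- With f₁ = V∂_x − (V + Γ(V,R))∂_R + (R − Γ(V,V))∂_V and X₁₂ := −V∂_R + R∂_V on a coordinate chart of TM ⊕ TM, the bracket f₁₂₁ = −[f₁, X₁₂] equals R∂_x − Γ(R,R)∂_R − Γ(R,V)∂_V. Hence integral curves of f₁₂₁ satisfy ẋ = R, D_tR = 0, D_tV = 0, so their x-projection is the geodesic t ↦ exp_x(tR). -/
/-- with `f₁ = V∂_x − (V + Γ(V,R))∂_R + (R − Γ(V,V))∂_V` and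
`X₁₂ = −V∂_R + R∂_V` on a chart of `TM ⊕ TM` (coordinates `p = (x, R, V)`),
the bracket `f₁₂₁ = −[f₁, X₁₂]` equals `R∂_x − Γ(R,R)∂_R − Γ(R,V)∂_V`; hence
integral curves of `f₁₂₁` satisfy `ẋ = R`, `D_tR = 0`, `D_tV = 0`
(`D_tW = Ẇ + Γ(ẋ,W)`), so their `x`-projection solves the geodesic equation
`ẍ + Γ(ẋ,ẋ) = 0`, i.e. is the geodesic `t ↦ exp_x(tR)`. -/
theorem stmt11 {E : Type*} [NormedAddCommGroup E] [NormedSpace ℝ E]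
    (Γ : E → E →L[ℝ] E →L[ℝ] E) (hΓ : ContDiff ℝ (⊤ : ℕ∞) Γ)
    (hsym : ∀ x u v, Γ x u v = Γ x v u)
    (f₁ X₁₂ f₁₂₁ : E × E × E → E × E × E)
    (hf₁ : f₁ = fun p => (p.2.2, -(p.2.2 + Γ p.1 p.2.2 p.2.1), p.2.1 - Γ p.1 p.2.2 p.2.2))
    (hX₁₂ : X₁₂ = fun p => (0, -p.2.2, p.2.1))
    (hf₁₂₁ : f₁₂₁ = fun p => -(lieBkt f₁ X₁₂ p)) :
    (∀ p, f₁₂₁ p = (p.2.1, -(Γ p.1 p.2.1 p.2.1), -(Γ p.1 p.2.1 p.2.2))) ∧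
    (∀ c : ℝ → E × E × E, (∀ t, HasDerivAt c (f₁₂₁ (c t)) t) →
      ∀ t, deriv (fun s => (c s).1) t = (c t).2.1 ∧
        deriv (fun s => (c s).2.1) t
          + Γ ((c t).1) (deriv (fun s => (c s).1) t) ((c t).2.1) = 0 ∧
        deriv (fun s => (c s).2.2) t
          + Γ ((c t).1) (deriv (fun s => (c s).1) t) ((c t).2.2) = 0 ∧
        deriv (deriv (fun s => (c s).1)) t
          + Γ ((c t).1) (deriv (fun s => (c s).1) t) (deriv (fun s => (c s).1) t) = 0) := by
  -- the continuous linear map equal to X₁₂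
  set sndE : E × E × E →L[ℝ] E × E := ContinuousLinearMap.snd ℝ E (E × E) with hsndE
  set L : E × E × E →L[ℝ] E × E × E :=
    (0 : E × E × E →L[ℝ] E).prod
      (((-(ContinuousLinearMap.snd ℝ E E)).comp sndE).prod
        ((ContinuousLinearMap.fst ℝ E E).comp sndE)) with hL
  have hLX : X₁₂ = fun p => L p := by
    funext p
    simp [hX₁₂, hL, hsndE, ContinuousLinearMap.prod_apply]
  have key : ∀ p : E × E × E,
      f₁₂₁ p = (p.2.1, -(Γ p.1 p.2.1 p.2.1), -(Γ p.1 p.2.1 p.2.2)) := by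
    intro p
    obtain ⟨x, R, V⟩ := p
    -- derivative of X₁₂
    have hDX : fderiv ℝ X₁₂ (f₁ (x, R, V)) = L := by
      rw [hLX]; exact L.hasFDerivAt.fderiv
    -- derivative of components of f₁
    have hfst : HasFDerivAt (fun p : E × E × E => p.1)
        (ContinuousLinearMap.fst ℝ E (E × E)) (x, R, V) := hasFDerivAt_fst
    have hsnd : HasFDerivAt (fun p : E × E × E => p.2) sndE (x, R, V) := hasFDerivAt_snd
    have hR : HasFDerivAt (fun p : E × E × E => p.2.1)
        ((ContinuousLinearMap.fst ℝ E E).comp sndE) (x, R, V) :=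
      (hasFDerivAt_fst (E := E) (F := E)).comp _ hsnd
    have hV : HasFDerivAt (fun p : E × E × E => p.2.2)
        ((ContinuousLinearMap.snd ℝ E E).comp sndE) (x, R, V) :=
      (hasFDerivAt_snd (E := E) (F := E)).comp _ hsnd
    have hΓx : HasFDerivAt (fun p : E × E × E => Γ p.1)
        ((fderiv ℝ Γ x).comp (ContinuousLinearMap.fst ℝ E (E × E))) (x, R, V) :=
      ((hΓ.differentiable (by simp) x).hasFDerivAt).comp (g := Γ) _ hfst
    -- assemble derivative of f₁
    have hA := (hΓx.clm_apply hV).clm_apply hR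
    have hB := (hΓx.clm_apply hV).clm_apply hV
    have hDf : HasFDerivAt (𝕜 := ℝ)
        (fun p : E × E × E =>
          (p.2.2, -(p.2.2 + Γ p.1 p.2.2 p.2.1), p.2.1 - Γ p.1 p.2.2 p.2.2)) _ (x, R, V) :=
      hV.prodMk ((hV.add hA).neg.prodMk (hR.sub hB))
    have hDX : ∀ q : E × E × E,
        HasFDerivAt (𝕜 := ℝ) (fun p : E × E × E => ((0 : E), -p.2.2, p.2.1)) L q := by
      intro q
      exact L.hasFDerivAt
    -- compute the bracket
    rw [hf₁₂₁]
    simp only [lieBkt, hf₁, hX₁₂]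
    rw [(hDX _).fderiv, hDf.fderiv]
    simp only [hL, hsndE, ContinuousLinearMap.prod_apply, ContinuousLinearMap.comp_apply,
      ContinuousLinearMap.coe_fst', ContinuousLinearMap.coe_snd',
      ContinuousLinearMap.zero_apply, ContinuousLinearMap.neg_apply,
      ContinuousLinearMap.add_apply, ContinuousLinearMap.sub_apply, map_zero,
      ContinuousLinearMap.map_neg, ContinuousLinearMap.flip_apply,
      ContinuousLinearMap.coe_comp', Function.comp_apply]
    refine Prod.ext ?_ (Prod.ext ?_ ?_)
    · simp
    · simp only [Prod.snd_neg, Prod.snd_sub, Prod.fst_neg, Prod.fst_sub]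
      abel
    · simp only [Prod.snd_neg, Prod.snd_sub, Prod.fst_neg, Prod.fst_sub]
      abel
  refine ⟨key, ?_⟩
  intro c hc t
  have hc1 : ∀ s, HasDerivAt (fun s => (c s).1) ((c s).2.1) s := by
    intro s
    have h := ((hc s).hasFDerivAt.fst).hasDerivAt
    simpa [key (c s)] using h
  have hc2 : ∀ s, HasDerivAt (fun s => (c s).2.1) (-(Γ ((c s).1) ((c s).2.1) ((c s).2.1))) s := by
    intro s
    have h := (((hc s).hasFDerivAt.snd).fst).hasDerivAt
    simpa [key (c s)] using h
  have hc3 : ∀ s, HasDerivAt (fun s => (c s).2.2) (-(Γ ((c s).1) ((c s).2.1) ((c s).2.2))) s := by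
    intro s
    have h := (((hc s).hasFDerivAt.snd).snd).hasDerivAt
    simpa [key (c s)] using h
  have hd1 : deriv (fun s => (c s).1) = fun s => (c s).2.1 := by
    funext s; exact (hc1 s).deriv
  refine ⟨by rw [hd1], ?_, ?_, ?_⟩
  · rw [hd1, (hc2 t).deriv]; abel
  · rw [hd1, (hc3 t).deriv]; abel
  · rw [hd1, (hc2 t).deriv]; abel
end

section
/- Let f₁, f₂ be smooth vector fields on a manifold with [f₂, [f₁,f₂]] = [f₁,f₂] (as holds for the curvature-radii frame, where f₁₂ := [f₁,f₂]). Suppose Φ is a diffeomorphism with Φ_*f₁ = ε₁f₁ and Φ_*f₂ = −f₂ for some ε₁ ∈ {±1}. If moreover [f₁ + f₁₂, f₂] = 0 then Φ_*-invariance forces a contradiction: Φ_*[f₁ + f₁₂, f₂] = ∓2f₁₂ ≠ 0, provided f₁₂ is nowhere zero. Hence any such isometry must satisfy Φ_*f₂ = +f₂. -/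
open VectorField
open scoped ContDiff

theorem lieBkt_eq_lieBracket {E : Type*} [NormedAddCommGroup E] [NormedSpace ℝ E] (X Y : E → E) :
    lieBkt X Y = lieBracket ℝ X Y := rfl

section

variable {𝕜 : Type*} [NontriviallyNormedField 𝕜]
  {E : Type*} [NormedAddCommGroup E] [NormedSpace 𝕜 E]
  {F : Type*} [NormedAddCommGroup F] [NormedSpace 𝕜 F]

theorem fderiv_apply_lieBracket_of_related {Φ : E → F} {n : ℕ∞ω} {p : E}
    (hΦ : ContDiffAt 𝕜 n Φ p) (hn : minSmoothness 𝕜 2 ≤ n)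
    {X Y : E → E} {X' Y' : F → F} (hX : DifferentiableAt 𝕜 X p) (hY : DifferentiableAt 𝕜 Y p)
    (hX' : DifferentiableAt 𝕜 X' (Φ p)) (hY' : DifferentiableAt 𝕜 Y' (Φ p))
    (hrX : ∀ q, fderiv 𝕜 Φ q (X q) = X' (Φ q)) (hrY : ∀ q, fderiv 𝕜 Φ q (Y q) = Y' (Φ q)) :
    fderiv 𝕜 Φ p (lieBracket 𝕜 X Y p) = lieBracket 𝕜 X' Y' (Φ p) := by
  have hΦd : DifferentiableAt 𝕜 Φ p :=
    (hΦ.of_le (le_minSmoothness.trans hn)).differentiableAt two_ne_zero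
  rw [fderiv_apply_lieBracket hΦ hn hY hX, funext hrX, funext hrY,
    fderiv_fun_comp p hX' hΦd, fderiv_fun_comp p hY' hΦd]
  simp [lieBracket, hrX, hrY]

theorem lieBracket_const_smul_const_smul {V W : E → E} {x : E} (hV : DifferentiableAt 𝕜 V x)
    (hW : DifferentiableAt 𝕜 W x) (a b : 𝕜) :
    lieBracket 𝕜 (a • V) (b • W) x = (a * b) • lieBracket 𝕜 V W x := by
  rw [lieBracket_const_smul_left hV, lieBracket_const_smul_right hW, smul_smul]

theorem smul_eq_mul_smul_of_lieBracket_eq_self {Φ : E → E} {n : ℕ∞ω} (hΦ : ContDiff 𝕜 n Φ)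
    (hn : minSmoothness 𝕜 2 ≤ n) {W V : E → E} (hW : Differentiable 𝕜 W)
    (hV : Differentiable 𝕜 V) {a b : 𝕜} (hrW : ∀ q, fderiv 𝕜 Φ q (W q) = a • W (Φ q))
    (hrV : ∀ q, fderiv 𝕜 Φ q (V q) = b • V (Φ q)) (hWV : ∀ q, lieBracket 𝕜 W V q = V q)
    (p : E) : b • V (Φ p) = (a * b) • V (Φ p) :=
  calc b • V (Φ p) = fderiv 𝕜 Φ p (lieBracket 𝕜 W V p) := by rw [hWV, hrV]
    _ = lieBracket 𝕜 (a • W) (b • V) (Φ p) :=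
      fderiv_apply_lieBracket_of_related hΦ.contDiffAt hn (hW p) (hV p)
        ((hW _).const_smul a) ((hV _).const_smul b) hrW hrV
    _ = (a * b) • V (Φ p) := by rw [lieBracket_const_smul_const_smul (hW _) (hV _), hWV]

end

theorem stmt14_general {F : Type*} [NormedAddCommGroup F] [NormedSpace ℝ F] [Nonempty F]
    (f₁ f₂ : F → F) (hf₁ : ContDiff ℝ 2 f₁) (hf₂ : ContDiff ℝ 2 f₂)
    (Φ : F ≃ F) (hΦ : ContDiff ℝ 2 (Φ : F → F))
    (hrel : ∀ p, lieBkt f₂ (lieBkt f₁ f₂) p = lieBkt f₁ f₂ p)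
    (hne : ∀ p, lieBkt f₁ f₂ p ≠ 0)
    (ε₁ : ℝ) (hε₁ : ε₁ = 1 ∨ ε₁ = -1)
    (hΦ1 : ∀ p, fderiv ℝ (Φ : F → F) p (f₁ p) = ε₁ • f₁ (Φ p))
    (hΦ2 : (∀ p, fderiv ℝ (Φ : F → F) p (f₂ p) = f₂ (Φ p)) ∨
           (∀ p, fderiv ℝ (Φ : F → F) p (f₂ p) = -f₂ (Φ p))) :
    ∀ p, fderiv ℝ (Φ : F → F) p (f₂ p) = f₂ (Φ p) := by
  rcases hΦ2 with hpos | hneg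
  · exact hpos
  exfalso
  simp only [lieBkt_eq_lieBracket] at hrel hne
  have hd₁ : Differentiable ℝ f₁ := hf₁.differentiable two_ne_zero
  have hd₂ : Differentiable ℝ f₂ := hf₂.differentiable two_ne_zero
  have hd₁₂ : Differentiable ℝ (lieBracket ℝ f₁ f₂) :=
    (hf₁.lieBracket_vectorField hf₂ (m := 1) (by norm_num)).differentiable one_ne_zero
  have hΦ₂ : ∀ q, fderiv ℝ Φ q (f₂ q) = (-1 : ℝ) • f₂ (Φ q) := by simpa using hneg
  have hΦ₁₂ : ∀ q, fderiv ℝ Φ q (lieBracket ℝ f₁ f₂ q) = (-ε₁) • lieBracket ℝ f₁ f₂ (Φ q) := by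
    intro q
    rw [fderiv_apply_lieBracket_of_related hΦ.contDiffAt (by simp) (hd₁ q) (hd₂ q)
      ((hd₁ _).const_smul ε₁) ((hd₂ _).const_smul (-1)) hΦ1 hΦ₂,
      lieBracket_const_smul_const_smul (hd₁ _) (hd₂ _), mul_neg_one]
  obtain ⟨p⟩ := ‹Nonempty F›
  have hscale := smul_eq_mul_smul_of_lieBracket_eq_self hΦ (by simp) hd₂ hd₁₂ hΦ₂ hΦ₁₂ hrel p
  have hzero : (2 * ε₁) • lieBracket ℝ f₁ f₂ (Φ p) = 0 := by
    linear_combination (norm := module) -hscale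
  have hε : 2 * ε₁ ≠ 0 := by rcases hε₁ with rfl | rfl <;> norm_num
  exact hne (Φ p) ((smul_eq_zero.mp hzero).resolve_left hε)

/-- let `f₁, f₂` be smooth vector fields with `f₁₂ := [f₁,f₂]`
nowhere vanishing, `[f₂, f₁₂] = f₁₂` and `[f₁ + f₁₂, f₂] = 0`.  If a (C²)
diffeomorphism `Φ` satisfies `Φ_*f₁ = ε₁ f₁` (`ε₁ = ±1`) and `Φ_*f₂ = ±f₂`,
then the case `Φ_*f₂ = −f₂` is impossible (it would give
`0 = Φ_*[f₁ + f₁₂, f₂] = ∓2f₁₂ ≠ 0`); hence `Φ_*f₂ = +f₂`. -/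
theorem stmt14 {F : Type*} [NormedAddCommGroup F] [NormedSpace ℝ F] [Nonempty F]
    (f₁ f₂ : F → F) (hf₁ : ContDiff ℝ 2 f₁) (hf₂ : ContDiff ℝ 2 f₂)
    (Φ : F ≃ F) (hΦ : ContDiff ℝ 2 (Φ : F → F)) (hΦinv : ContDiff ℝ 2 (Φ.symm : F → F))
    (hrel : ∀ p, lieBkt f₂ (lieBkt f₁ f₂) p = lieBkt f₁ f₂ p)
    (hne : ∀ p, lieBkt f₁ f₂ p ≠ 0)
    (hcomm : ∀ p, lieBkt (fun q => f₁ q + lieBkt f₁ f₂ q) f₂ p = 0)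
    (ε₁ : ℝ) (hε₁ : ε₁ = 1 ∨ ε₁ = -1)
    (hΦ1 : ∀ p, fderiv ℝ (Φ : F → F) p (f₁ p) = ε₁ • f₁ (Φ p))
    (hΦ2 : (∀ p, fderiv ℝ (Φ : F → F) p (f₂ p) = f₂ (Φ p)) ∨
           (∀ p, fderiv ℝ (Φ : F → F) p (f₂ p) = -f₂ (Φ p))) :
    ∀ p, fderiv ℝ (Φ : F → F) p (f₂ p) = f₂ (Φ p) :=
  stmt14_general f₁ f₂ hf₁ hf₂ Φ hΦ hrel hne ε₁ hε₁ hΦ1 hΦ2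
end
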